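/- (Hollom) Let H be the 3-uniform hypergraph on vertices u₁,…,u₁₀ with the six hyperedges {u₁,u₂,u₃}, {u₂,u₄,u₅}, {u₃,u₆,u₉}, {u₄,u₇,u₈}, {u₅,u₆,u₇}, {u₈,u₉,u₁₀}, and let T = {u₂,u₇,u₉} be the set of transversal vertices. In the alternative bunkbed hypergraph percolation on H with transversal set T, the probability that (u₁,0) is connected to (u₁₀,1) equals 13/64, and the probability that (u₁,0) is connected to (u₁₀,0) equals 12/64. -/
import Mathlib


open Classical

noncomputable section

/-- Hollom's 3-uniform hypergraph `H` on the ten vertices `u₁, …, u₁₀`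
(encoded as `0, …, 9 : Fin 10`), with the six hyperedges
`{u₁,u₂,u₃}, {u₂,u₄,u₅}, {u₃,u₆,u₉}, {u₄,u₇,u₈}, {u₅,u₆,u₇}, {u₈,u₉,u₁₀}`. -/
def hollomEdges : Fin 6 → Finset (Fin 10) :=
  ![{0, 1, 2}, {1, 3, 4}, {2, 5, 8}, {3, 6, 7}, {4, 5, 6}, {7, 8, 9}]

/-- The transversal set `T = {u₂, u₇, u₉}`. -/
def hollomT : Finset (Fin 10) := {1, 6, 8}

/-- One step of a connection path in the bunkbed hypergraph, given the configuration
`ε : Fin 6 → Bool` recording, for each hyperedge of `H`, the level at which its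
copy is retained (the copy at the other level being deleted): two vertices of the
bunkbed hypergraph are joined by a step if they lie in a common retained hyperedge
copy, or if they form a post over a transversal vertex. -/
def altStep (ε : Fin 6 → Bool) (x y : Fin 10 × Bool) : Prop :=
  (∃ k : Fin 6, x.2 = ε k ∧ y.2 = ε k ∧ x.1 ∈ hollomEdges k ∧ y.1 ∈ hollomEdges k) ∨
    (x.1 = y.1 ∧ x.1 ∈ hollomT)

/-- The probability, in the alternative bunkbed hypergraph percolation on `H` with
transversal set `T` (each hyperedge independently retained at a uniformly random
level and deleted at the other), that `x` is connected to `y`. -/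
def altProb (x y : Fin 10 × Bool) : ℝ :=
  ∑ ε : Fin 6 → Bool, (1 / 2 : ℝ) ^ 6 *
    (if Relation.ReflTransGen (altStep ε) x y then 1 else 0)

instance altStepDec (ε : Fin 6 → Bool) : DecidableRel (altStep ε) := fun x y => by
  unfold altStep; infer_instance

/-- The list of all 20 vertices of the bunkbed hypergraph. -/
def allV : List (Fin 10 × Bool) :=
  (List.finRange 10).map (·, false) ++ (List.finRange 10).map (·, true)

lemma mem_allV : ∀ v : Fin 10 × Bool, v ∈ allV := by decide

/-- One BFS step: all vertices in `S` or reachable from `S` in one step. -/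
def nextL (ε : Fin 6 → Bool) (S : List (Fin 10 × Bool)) : List (Fin 10 × Bool) :=
  allV.filter (fun y => decide (y ∈ S) || S.any (fun a => decide (altStep ε a y)))

/-- The set of vertices reachable from `x`, computed by iterating `nextL`. -/
def reachL (ε : Fin 6 → Bool) (x : Fin 10 × Bool) : List (Fin 10 × Bool) :=
  (nextL ε)^[7] [x]

lemma reachL_sound (ε : Fin 6 → Bool) (x : Fin 10 × Bool) :
    ∀ y ∈ reachL ε x, Relation.ReflTransGen (altStep ε) x y := by
  suffices h : ∀ n, ∀ y ∈ (nextL ε)^[n] [x], Relation.ReflTransGen (altStep ε) x y from h 7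
  intro n
  induction n with
  | zero => intro y hy; simp at hy; subst hy; exact .refl
  | succ n ih =>
    intro y hy
    rw [Function.iterate_succ_apply'] at hy
    obtain ⟨-, hcond⟩ := List.mem_filter.1 hy
    rw [Bool.or_eq_true] at hcond
    rcases hcond with h | h
    · exact ih y (of_decide_eq_true h)
    · obtain ⟨a, ha, hstep⟩ := List.any_eq_true.1 h
      exact (ih a ha).tail (of_decide_eq_true hstep)

lemma mem_reachL_self (ε : Fin 6 → Bool) (x : Fin 10 × Bool) : x ∈ reachL ε x := by
  suffices h : ∀ n, x ∈ (nextL ε)^[n] [x] from h 7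
  intro n
  induction n with
  | zero => simp
  | succ n ih =>
    rw [Function.iterate_succ_apply']
    refine List.mem_filter.2 ⟨mem_allV x, ?_⟩
    rw [Bool.or_eq_true]
    exact Or.inl (decide_eq_true ih)

set_option maxHeartbeats 8000000 in
set_option maxRecDepth 20000 in
lemma reachL_fix : ∀ ε : Fin 6 → Bool,
    nextL ε (reachL ε (0, false)) = reachL ε (0, false) := by decide

lemma reachL_complete (ε : Fin 6 → Bool) (y : Fin 10 × Bool)
    (h : Relation.ReflTransGen (altStep ε) (0, false) y) :
    y ∈ reachL ε (0, false) := by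
  induction h with
  | refl => exact mem_reachL_self ε _
  | tail _ hstep ih =>
    rw [← reachL_fix ε]
    rename_i b c _
    refine List.mem_filter.2 ⟨mem_allV c, ?_⟩
    rw [Bool.or_eq_true]
    exact Or.inr (List.any_eq_true.2 ⟨b, ih, decide_eq_true hstep⟩)

lemma reach_iff (ε : Fin 6 → Bool) (y : Fin 10 × Bool) :
    Relation.ReflTransGen (altStep ε) (0, false) y ↔ y ∈ reachL ε (0, false) :=
  ⟨reachL_complete ε y, reachL_sound ε _ y⟩

lemma altProb_eq (y : Fin 10 × Bool) :
    altProb (0, false) y =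
      ((Finset.univ.filter
        (fun ε : Fin 6 → Bool => y ∈ reachL ε (0, false))).card : ℝ) / 64 := by
  unfold altProb
  rw [Finset.sum_congr rfl (fun ε _ => by rw [if_congr (reach_iff ε y) rfl rfl])]
  rw [← Finset.mul_sum, Finset.sum_boole]
  norm_num
  ring

set_option maxHeartbeats 8000000 in
set_option maxRecDepth 20000 in
lemma count_true :
    (Finset.univ.filter
      (fun ε : Fin 6 → Bool => ((9 : Fin 10), true) ∈ reachL ε (0, false))).card = 13 := by
  decide

set_option maxHeartbeats 8000000 in
set_option maxRecDepth 20000 in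
lemma count_false :
    (Finset.univ.filter
      (fun ε : Fin 6 → Bool => ((9 : Fin 10), false) ∈ reachL ε (0, false))).card = 12 := by
  decide

/-- Hollom's lemma: in the alternative bunkbed hypergraph percolation on `H` with
transversal set `T = {u₂, u₇, u₉}`, the probability that `(u₁, 0)` is connected to
`(u₁₀, 1)` equals `13/64`, and the probability that `(u₁, 0)` is connected to
`(u₁₀, 0)` equals `12/64`. -/
theorem hollom_lemma :
    altProb (0, false) (9, true) = 13 / 64 ∧ altProb (0, false) (9, false) = 12 / 64 := by
  refine ⟨?_, ?_⟩
  · rw [altProb_eq, count_true]; norm_num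
  · rw [altProb_eq, count_false]; norm_num
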